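/- arXiv:1004.2012 — 4 statements merged into one kernel-verified Lean document; each statement's English description precedes it below -/
import Mathlib

section
/- Let $f$ be a nonnegative $C^2$ function on a neighborhood $U$ of the origin in $\mathbb{R}^n$ with $f(0)=0$, satisfying the Lojasiewicz inequality $|\nabla f(x)|\geq C|f(x)|^{\alpha}$ on $U$ for some $C>0$ and $\alpha\in(1/2,1)$. Then there is a neighborhood $V\subset U$ of the origin such that for any $x_0\in V$, the downward gradient flow $\dot x(t)=-\nabla f(x(t))$, $x(0)=x_0$, exists for all $t\geq 0$, stays in $U$, and converges to a limit $x_\infty\in U$ with $f(x_\infty)=0$; moreover $f(x(t))\leq C' t^{-1/(2\alpha-1)}$ and $d(x(t),x_\infty)\leq C' t^{-(1-\alpha)/(2\alpha-1)}$ for suitable $C'>0$. -/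
/-!
Along the downward gradient flow `F = f ∘ x` satisfies `F' = -‖∇f‖²`, so the Lojasiewicz
inequality gives `(F ^ (1 - 2α))' ≥ C² (2α - 1)`, whence `F t = O(t ^ (-1 / (2α - 1)))`, and
`-(F ^ (1 - α))' ≥ C (1 - α) ‖x'‖`, so the length of the trajectory after time `a` is at most
`F a ^ (1 - α) / (C (1 - α))`. Near the origin `f` is small, so this length bound traps the
trajectory in a ball where the hypotheses hold, makes it Cauchy, and gives the rate of
convergence. The flow is global because `-∇f` may be replaced by a compactly supported `C¹`
vector field agreeing with it near the origin; and if `f` vanishes at some point of the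
trajectory, that point is a critical point of `f`, so the trajectory is constant.
-/

open Filter Set Metric Real Topology InnerProductSpace
open scoped NNReal Gradient

section IntegralCurve

variable {E : Type*} [NormedAddCommGroup E] [NormedSpace ℝ E] {v : E → E} {K : ℝ≥0}

theorem LipschitzWith.exists_forall_mem_Icc_hasDerivWithinAt [CompleteSpace E]
    (hv : LipschitzWith K v) {M : ℝ≥0} (hM : ∀ x, ‖v x‖ ≤ M) (x₀ : E) (T : ℝ≥0) :
    ∃ X : ℝ → E, X 0 = x₀ ∧
      ∀ t ∈ Icc (-T : ℝ) T, HasDerivWithinAt X (v (X t)) (Icc (-T : ℝ) T) t :=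
  IsPicardLindelof.exists_eq_forall_mem_Icc_hasDerivWithinAt₀ (t₀ := ⟨0, by simp⟩)
    (a := M * T) (L := M) (IsPicardLindelof.of_time_independent (fun x _ ↦ hM x)
      hv.lipschitzOnWith (by simp))

theorem LipschitzWith.exists_isIntegralCurve [CompleteSpace E] (hv : LipschitzWith K v)
    {M : ℝ≥0} (hM : ∀ x, ‖v x‖ ≤ M) (x₀ : E) :
    ∃ X : ℝ → E, X 0 = x₀ ∧ IsIntegralCurve X (fun _ ↦ v) := by
  -- glue the solutions on `[-N-1, N+1]`, which agree on overlaps by uniqueness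
  choose Xs hXs0 hXs using fun N : ℕ ↦ hv.exists_forall_mem_Icc_hasDerivWithinAt hM x₀ (N + 1)
  have hXs' : ∀ N : ℕ, ∀ t : ℝ, |t| < N + 1 → HasDerivAt (Xs N) (v (Xs N t)) t := by
    intro N t ht
    obtain ⟨ht₁, ht₂⟩ := abs_lt.1 ht
    exact (hXs N t (by push_cast; exact ⟨ht₁.le, ht₂.le⟩)).hasDerivAt
      (Icc_mem_nhds (by push_cast; exact ht₁) (by push_cast; exact ht₂))
  have hagree : ∀ N N' : ℕ, ∀ t : ℝ, |t| < N + 1 → |t| < N' + 1 → Xs N t = Xs N' t := by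
    intro N N' t hN hN'
    set b := min ((N : ℝ) + 1) (N' + 1)
    have hb : 0 < b := lt_min (by positivity) (by positivity)
    refine ODE_solution_unique_of_mem_Ioo (v := fun _ ↦ v) (s := fun _ ↦ univ)
      (fun _ _ ↦ hv.lipschitzOnWith) (a := -b) (b := b) ⟨by linarith, hb⟩
      (fun s hs ↦ ⟨hXs' N s ?_, trivial⟩) (fun s hs ↦ ⟨hXs' N' s ?_, trivial⟩)
      (by rw [hXs0, hXs0]) (abs_lt.1 (lt_min hN hN'))
    · exact (abs_lt.2 hs).trans_le (min_le_left _ _)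
    · exact (abs_lt.2 hs).trans_le (min_le_right _ _)
  have hceil : ∀ t : ℝ, |t| < ⌈|t|⌉₊ + 1 := fun t ↦ (Nat.le_ceil _).trans_lt (lt_add_one _)
  refine ⟨fun t ↦ Xs ⌈|t|⌉₊ t, by simpa using hXs0 0, fun t ↦ ?_⟩
  refine (hXs' _ t (hceil t)).congr_of_eventuallyEq ?_
  filter_upwards [(isOpen_lt continuous_abs continuous_const).mem_nhds (hceil t)] with s hs
  exact hagree _ _ s (hceil s) hs

theorem IsIntegralCurve.eq_of_eq_zero (hv : LipschitzWith K v) {X : ℝ → E}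
    (hX : IsIntegralCurve X (fun _ ↦ v)) {c : ℝ} (hc : v (X c) = 0) (t : ℝ) : X t = X c :=
  congrFun (ODE_solution_unique_univ (v := fun _ ↦ v) (s := fun _ ↦ univ) (t₀ := c) (f := X)
    (g := fun _ ↦ X c) (fun _ ↦ hv.lipschitzOnWith) (fun t ↦ ⟨hX t, trivial⟩)
    (fun _ ↦ ⟨by simpa [hc] using hasDerivAt_const _ (X c), trivial⟩) rfl) t

end IntegralCurve

theorem ContDiffOn.exists_lipschitzWith_eqOn_closedBall {E F : Type*} [NormedAddCommGroup E]
    [NormedSpace ℝ E] [FiniteDimensional ℝ E] [NormedAddCommGroup F] [NormedSpace ℝ F]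
    {w : E → F} {s : Set E} (hw : ContDiffOn ℝ 1 w s) (hs : IsOpen s) {c : E} {r R : ℝ}
    (hr : 0 < r) (hrR : r < R) (hRs : closedBall c R ⊆ s) :
    ∃ (v : E → F) (K M : ℝ≥0), LipschitzWith K v ∧ (∀ x, ‖v x‖ ≤ M) ∧
      EqOn v w (closedBall c r) := by
  let χ : ContDiffBump c := ⟨r, R, hr, hrR⟩
  have hsupp : HasCompactSupport (fun x ↦ χ x • w x) := χ.hasCompactSupport.smul_right
  have hsmooth : ContDiff ℝ 1 (fun x ↦ χ x • w x) := by
    refine contDiff_iff_contDiffAt.2 fun x ↦ ?_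
    by_cases hx : x ∈ tsupport χ
    · rw [χ.tsupport_eq] at hx
      exact χ.contDiffAt.smul (hw.contDiffAt (hs.mem_nhds (hRs hx)))
    · refine (contDiffAt_const (c := (0 : F))).congr_of_eventuallyEq ?_
      filter_upwards [notMem_tsupport_iff_eventuallyEq.1 hx] with y hy
      simp [hy]
  obtain ⟨K, hK⟩ := hsmooth.lipschitzWith_of_hasCompactSupport hsupp one_ne_zero
  obtain ⟨M, hM⟩ := hsupp.exists_bound_of_continuous hsmooth.continuous
  refine ⟨_, K, ⟨max M 0, le_max_right _ _⟩, hK, fun x ↦ (hM x).trans (le_max_left _ _),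
    fun x hx ↦ ?_⟩
  simp [χ.one_of_mem_closedBall hx]

section Gradient

variable {E : Type*} [NormedAddCommGroup E] [InnerProductSpace ℝ E] [CompleteSpace E]
  {f : E → ℝ} {x : E}

theorem ContDiffOn.gradient_of_isOpen {s : Set E} {m n : WithTop ℕ∞} (hf : ContDiffOn ℝ n f s)
    (hs : IsOpen s) (hmn : m + 1 ≤ n) : ContDiffOn ℝ m (∇ f) s :=
  (toDual ℝ E).symm.contDiff.comp_contDiffOn (hf.fderiv_of_isOpen hs hmn)

theorem IsLocalMin.gradient_eq_zero (h : IsLocalMin f x) : ∇ f x = 0 := by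
  rw [gradient, h.fderiv_eq_zero, map_zero]

theorem gradient_eq_zero_of_forall_nonneg {s : Set E} (hs : s ∈ 𝓝 x) (hf : ∀ y ∈ s, 0 ≤ f y)
    (hx : f x = 0) : ∇ f x = 0 :=
  IsLocalMin.gradient_eq_zero <| by
    filter_upwards [hs] with y hy
    exact hx ▸ hf y hy

theorem HasDerivAt.hasDerivAt_comp_neg_gradient {X : ℝ → E} {t : ℝ}
    (hX : HasDerivAt X (-∇ f (X t)) t) (hf : DifferentiableAt ℝ f (X t)) :
    HasDerivAt (fun s ↦ f (X s)) (-‖∇ f (X t)‖ ^ 2) t := by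
  have h := hf.hasFDerivAt.comp_hasDerivAt t hX
  rwa [hf.hasGradientAt.fderiv_apply, inner_neg_right, real_inner_self_eq_norm_sq] at h

end Gradient

theorem Continuous.forall_lt_of_forall_Icc_le {g : ℝ → ℝ} (hg : Continuous g) {r : ℝ}
    (h0 : g 0 < r) (h : ∀ T > 0, (∀ u ∈ Icc 0 T, g u ≤ r) → g T < r) :
    ∀ t ≥ 0, g t < r := by
  by_contra! hbad
  set bad := {t : ℝ | 0 ≤ t ∧ r ≤ g t}
  have hclosed : IsClosed bad :=
    (isClosed_le continuous_const continuous_id).inter (isClosed_le continuous_const hg)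
  have hbdd : BddBelow bad := ⟨0, fun _ hu ↦ hu.1⟩
  have hT : sInf bad ∈ bad := hclosed.csInf_mem hbad hbdd
  have hTpos : 0 < sInf bad := by
    refine hT.1.lt_of_ne fun h ↦ ?_
    have := hT.2
    rw [← h] at this
    linarith
  -- `g < r` before the first exit time `T`, hence `g ≤ r` on the closure `[0, T]`
  have hbefore : Icc 0 (sInf bad) ⊆ {u | g u ≤ r} := by
    rw [← closure_Ico hTpos.ne]
    refine closure_minimal (fun u hu ↦ show g u ≤ r from le_of_not_gt fun hu' ↦ ?_)
      (isClosed_le hg continuous_const)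
    exact (csInf_le hbdd ⟨hu.1, hu'.le⟩).not_gt hu.2
  exact (h _ hTpos hbefore).not_ge hT.2

theorem exists_tendsto_of_dist_le {E : Type*} [PseudoMetricSpace E] [CompleteSpace E]
    {X : ℝ → E} {φ : ℝ → ℝ} (hφ : Tendsto φ atTop (𝓝 0))
    (h : ∀ a b, 0 ≤ a → a ≤ b → dist (X b) (X a) ≤ φ a) :
    ∃ L, Tendsto X atTop (𝓝 L) ∧ ∀ t ≥ 0, dist (X t) L ≤ φ t := by
  have hcauchy : CauchySeq X := by
    refine Metric.cauchySeq_iff'.2 fun ε hε ↦ ?_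
    obtain ⟨N, hN⟩ :=
      eventually_atTop.1 ((hφ.eventually (gt_mem_nhds hε)).and (eventually_ge_atTop 0))
    exact ⟨N, fun t ht ↦ (h N t (hN N le_rfl).2 ht).trans_lt (hN N le_rfl).1⟩
  obtain ⟨L, hL⟩ := cauchySeq_tendsto_of_complete hcauchy
  refine ⟨L, hL, fun t ht ↦ le_of_tendsto (tendsto_const_nhds.dist hL) ?_⟩
  filter_upwards [eventually_ge_atTop t] with s hs
  rw [dist_comm]
  exact h t s ht hs

section DifferentialInequality

variable {F G : ℝ → ℝ} {C α a b : ℝ}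

theorem rpow_add_mul_le_rpow_of_hasDerivAt (hC : 0 ≤ C) (hα : 1 / 2 ≤ α) (hab : a ≤ b)
    (hF : ∀ u ∈ Icc a b, HasDerivAt F (-G u ^ 2) u) (hpos : ∀ u ∈ Icc a b, 0 < F u)
    (hG : ∀ u ∈ Icc a b, C * F u ^ α ≤ G u) :
    F a ^ (1 - 2 * α) + C ^ 2 * (2 * α - 1) * (b - a) ≤ F b ^ (1 - 2 * α) := by
  have hderiv : ∀ u ∈ Icc a b,
      HasDerivAt (fun u ↦ F u ^ (1 - 2 * α) - C ^ 2 * (2 * α - 1) * u)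
        (-G u ^ 2 * (1 - 2 * α) * F u ^ (1 - 2 * α - 1) - C ^ 2 * (2 * α - 1)) u :=
    fun u hu ↦ ((hF u hu).rpow_const (.inl (hpos u hu).ne')).sub
      (by simpa using (hasDerivAt_id u).const_mul _)
  have hmono : MonotoneOn (fun u ↦ F u ^ (1 - 2 * α) - C ^ 2 * (2 * α - 1) * u) (Icc a b) := by
    refine monotoneOn_of_hasDerivWithinAt_nonneg (convex_Icc a b)
      (HasDerivAt.continuousOn hderiv)
      (fun u hu ↦ (hderiv u (interior_subset hu)).hasDerivWithinAt) fun u hu ↦ ?_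
    have hu := interior_subset hu
    have hFα : 0 < F u ^ α := rpow_pos_of_pos (hpos u hu) α
    have hexp : F u ^ (1 - 2 * α - 1) = ((F u ^ α) ^ 2)⁻¹ := by
      rw [show 1 - 2 * α - 1 = -(α * 2) by ring, rpow_neg (hpos u hu).le,
        rpow_mul (hpos u hu).le, rpow_two]
    have hsq : C ^ 2 ≤ G u ^ 2 * ((F u ^ α) ^ 2)⁻¹ := by
      rw [← div_eq_mul_inv, le_div_iff₀ (by positivity), ← mul_pow]
      exact pow_le_pow_left₀ (by positivity) (hG u hu) 2
    rw [hexp, sub_nonneg]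
    nlinarith
  have := hmono ⟨le_rfl, hab⟩ ⟨hab, le_rfl⟩ hab
  simp only at this
  linarith

theorem le_mul_rpow_of_hasDerivAt (hC : 0 < C) (hα : 1 / 2 < α) {t : ℝ} (ht : 0 < t)
    (hF : ∀ u ∈ Icc 0 t, HasDerivAt F (-G u ^ 2) u) (hpos : ∀ u ∈ Icc 0 t, 0 < F u)
    (hG : ∀ u ∈ Icc 0 t, C * F u ^ α ≤ G u) :
    F t ≤ (C ^ 2 * (2 * α - 1)) ^ (-(1 / (2 * α - 1))) * t ^ (-(1 / (2 * α - 1))) := by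
  have h2α : 0 < 2 * α - 1 := by linarith
  have hk : 0 < C ^ 2 * (2 * α - 1) := by positivity
  have hkt : C ^ 2 * (2 * α - 1) * t ≤ F t ^ (1 - 2 * α) := by
    have := rpow_add_mul_le_rpow_of_hasDerivAt hC.le hα.le ht.le hF hpos hG
    have := rpow_nonneg (hpos 0 ⟨le_rfl, ht.le⟩).le (1 - 2 * α)
    linarith
  have hinv : 1 / (1 - 2 * α) = -(1 / (2 * α - 1)) := by
    rw [show 1 - 2 * α = -(2 * α - 1) by ring, div_neg]
  calc F t = (F t ^ (1 - 2 * α)) ^ (1 / (1 - 2 * α)) := by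
        rw [← rpow_mul (hpos t ⟨ht.le, le_rfl⟩).le, mul_one_div_cancel (by linarith), rpow_one]
    _ ≤ (C ^ 2 * (2 * α - 1) * t) ^ (1 / (1 - 2 * α)) :=
        rpow_le_rpow_of_nonpos (by positivity) hkt (by rw [hinv, neg_nonpos]; positivity)
    _ = _ := by rw [mul_rpow hk.le ht.le, hinv]

theorem norm_sub_le_of_hasDerivAt {E : Type*} [NormedAddCommGroup E] [NormedSpace ℝ E]
    {X X' : ℝ → E} (hC : 0 < C) (hα : α < 1) (hab : a ≤ b)
    (hF : ∀ u ∈ Icc a b, HasDerivAt F (-G u ^ 2) u) (hpos : ∀ u ∈ Icc a b, 0 < F u)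
    (hG : ∀ u ∈ Icc a b, C * F u ^ α ≤ G u)
    (hX : ∀ u ∈ Icc a b, HasDerivAt X (X' u) u) (hX' : ∀ u ∈ Icc a b, ‖X' u‖ ≤ G u) :
    ‖X b - X a‖ ≤ (F a ^ (1 - α) - F b ^ (1 - α)) / (C * (1 - α)) := by
  have hderiv : ∀ u ∈ Icc a b,
      HasDerivAt (fun u ↦ (F a ^ (1 - α) - F u ^ (1 - α)) / (C * (1 - α)))
        (-(-G u ^ 2 * (1 - α) * F u ^ (1 - α - 1)) / (C * (1 - α))) u :=
    fun u hu ↦ (((hF u hu).rpow_const (.inl (hpos u hu).ne')).const_sub _).div_const _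
  refine image_norm_le_of_norm_deriv_right_le_deriv_boundary' (f := fun u ↦ X u - X a)
    (HasDerivAt.continuousOn fun u hu ↦ (hX u hu).sub_const _)
    (fun u hu ↦ ((hX u (Ico_subset_Icc_self hu)).sub_const _).hasDerivWithinAt) (by simp)
    (HasDerivAt.continuousOn hderiv)
    (fun u hu ↦ (hderiv u (Ico_subset_Icc_self hu)).hasDerivWithinAt) (fun u hu ↦ ?_)
    ⟨hab, le_rfl⟩
  have hu := Ico_subset_Icc_self hu
  have hFα : 0 < F u ^ α := rpow_pos_of_pos (hpos u hu) α
  have hGpos : 0 < G u := (mul_pos hC hFα).trans_le (hG u hu)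
  have hexp : F u ^ (1 - α - 1) = (F u ^ α)⁻¹ := by
    rw [show 1 - α - 1 = -α by ring, rpow_neg (hpos u hu).le]
  rw [hexp, show -(-G u ^ 2 * (1 - α) * (F u ^ α)⁻¹) / (C * (1 - α)) =
    G u * (G u / (C * F u ^ α)) by field_simp [(sub_pos.2 hα).ne']]
  refine (hX' u hu).trans (le_mul_of_one_le_right hGpos.le ?_)
  rw [one_le_div (by positivity)]
  exact hG u hu

end DifferentialInequality

section GradientFlow

variable {E : Type*} [NormedAddCommGroup E] [InnerProductSpace ℝ E] [CompleteSpace E]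
  {f : E → ℝ} {X : ℝ → E} {C α a b t : ℝ}

structure IsLojasiewiczFlowAt (f : E → ℝ) (C α : ℝ) (X : ℝ → E) (t : ℝ) : Prop where
  hasDerivAt : HasDerivAt X (-∇ f (X t)) t
  differentiableAt : DifferentiableAt ℝ f (X t)
  pos : 0 < f (X t)
  le_norm_gradient : C * f (X t) ^ α ≤ ‖∇ f (X t)‖

theorem IsLojasiewiczFlowAt.hasDerivAt_comp (h : IsLojasiewiczFlowAt f C α X t) :
    HasDerivAt (fun s ↦ f (X s)) (-‖∇ f (X t)‖ ^ 2) t :=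
  h.hasDerivAt.hasDerivAt_comp_neg_gradient h.differentiableAt

theorem norm_sub_le_of_isLojasiewiczFlowAt (hC : 0 < C) (hα : α < 1) (hab : a ≤ b)
    (h : ∀ u ∈ Icc a b, IsLojasiewiczFlowAt f C α X u) :
    ‖X b - X a‖ ≤ f (X a) ^ (1 - α) / (C * (1 - α)) := by
  refine (norm_sub_le_of_hasDerivAt hC hα hab (fun u hu ↦ (h u hu).hasDerivAt_comp)
    (fun u hu ↦ (h u hu).pos) (fun u hu ↦ (h u hu).le_norm_gradient)
    (fun u hu ↦ (h u hu).hasDerivAt) (fun u _ ↦ (norm_neg _).le)).trans ?_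
  gcongr
  linarith [rpow_nonneg (h b ⟨hab, le_rfl⟩).pos.le (1 - α)]

theorem mem_ball_of_isLojasiewiczFlowAt (hC : 0 < C) (hα : α < 1) (hXc : Continuous X)
    {ρ : ℝ} (hρ : 0 < ρ) (h : ∀ t, X t ∈ closedBall (X 0) ρ → IsLojasiewiczFlowAt f C α X t)
    (hsmall : f (X 0) ^ (1 - α) < C * (1 - α) * ρ) : ∀ t ≥ 0, X t ∈ ball (X 0) ρ := by
  refine (hXc.dist continuous_const).forall_lt_of_forall_Icc_le (by simpa using hρ)
    fun T hT hle ↦ ?_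
  rw [dist_eq_norm]
  refine (norm_sub_le_of_isLojasiewiczFlowAt hC hα hT.le fun u hu ↦ h u (hle u hu)).trans_lt ?_
  rwa [div_lt_iff₀ (by nlinarith), mul_comm]

theorem exists_tendsto_of_isLojasiewiczFlowAt (hC : 0 < C) (hα : α ∈ Ioo (1 / 2) 1)
    (h : ∀ t ≥ 0, IsLojasiewiczFlowAt f C α X t) :
    ∃ L, Tendsto X atTop (𝓝 L) ∧ Tendsto (fun t ↦ f (X t)) atTop (𝓝 0) ∧
      ∃ C' > 0, ∀ t > 0, f (X t) ≤ C' * t ^ (-(1 / (2 * α - 1))) ∧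
        dist (X t) L ≤ C' * t ^ (-((1 - α) / (2 * α - 1))) := by
  obtain ⟨hα₁, hα₂⟩ := hα
  have h2α : 0 < 2 * α - 1 := by linarith
  have h1α : 0 < 1 - α := by linarith
  set A := (C ^ 2 * (2 * α - 1)) ^ (-(1 / (2 * α - 1)))
  have hA : 0 < A := rpow_pos_of_pos (by positivity) _
  have hrate : ∀ t > 0, f (X t) ≤ A * t ^ (-(1 / (2 * α - 1))) := fun t ht ↦
    le_mul_rpow_of_hasDerivAt hC hα₁ ht (fun u hu ↦ (h u hu.1).hasDerivAt_comp)
      (fun u hu ↦ (h u hu.1).pos) (fun u hu ↦ (h u hu.1).le_norm_gradient)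
  have hF0 : Tendsto (fun t ↦ f (X t)) atTop (𝓝 0) := by
    refine squeeze_zero' (eventually_atTop.2 ⟨0, fun t ht ↦ (h t ht).pos.le⟩)
      (eventually_atTop.2 ⟨1, fun t ht ↦ hrate t (by linarith)⟩) ?_
    simpa using (tendsto_rpow_neg_atTop (by positivity)).const_mul A
  have hφ : Tendsto (fun t ↦ f (X t) ^ (1 - α) / (C * (1 - α))) atTop (𝓝 0) := by
    simpa [zero_rpow h1α.ne'] using
      ((continuous_rpow_const h1α.le).tendsto 0).comp hF0 |>.div_const (C * (1 - α))
  obtain ⟨L, hL, hdist⟩ := exists_tendsto_of_dist_le (X := X) hφ fun a b ha hab ↦ by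
    rw [dist_eq_norm]
    exact norm_sub_le_of_isLojasiewiczFlowAt hC hα₂ hab fun u hu ↦ h u (ha.trans hu.1)
  refine ⟨L, hL, hF0, max A (A ^ (1 - α) / (C * (1 - α))), lt_max_of_lt_left hA,
    fun t ht ↦ ⟨(hrate t ht).trans (by gcongr; exact le_max_left _ _),
      (hdist t ht.le).trans ?_⟩⟩
  calc f (X t) ^ (1 - α) / (C * (1 - α))
      ≤ (A * t ^ (-(1 / (2 * α - 1)))) ^ (1 - α) / (C * (1 - α)) := by
        gcongr
        exacts [(h t ht.le).pos.le, hrate t ht]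
    _ = A ^ (1 - α) / (C * (1 - α)) * t ^ (-((1 - α) / (2 * α - 1))) := by
        rw [mul_rpow hA.le (rpow_nonneg ht.le _), ← rpow_mul ht.le]
        ring_nf
    _ ≤ _ := by gcongr; exact le_max_right _ _

theorem IsIntegralCurve.isLojasiewiczFlowAt {v : E → E} {K : ℝ≥0} (hv : LipschitzWith K v)
    (hX : IsIntegralCurve X (fun _ ↦ v)) {U s : Set E} (hU : IsOpen U) (hsU : s ⊆ U)
    (hvs : EqOn v (-∇ f) s) (hf : DifferentiableOn ℝ f U) (hnonneg : ∀ x ∈ U, 0 ≤ f x)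
    (hloja : ∀ x ∈ U, C * f x ^ α ≤ ‖∇ f x‖) (h0 : 0 < f (X 0)) (ht : X t ∈ s) :
    IsLojasiewiczFlowAt f C α X t := by
  have htU := hsU ht
  refine ⟨by simpa [hvs ht] using hX t, hf.differentiableAt (hU.mem_nhds htU),
    (hnonneg _ htU).lt_of_ne fun hzero ↦ ?_, hloja _ htU⟩
  -- a zero of `f` is a critical point, hence an equilibrium of the flow
  have hv0 : v (X t) = 0 := by
    simp [hvs ht, gradient_eq_zero_of_forall_nonneg (hU.mem_nhds htU) hnonneg hzero.symm]
  rw [hX.eq_of_eq_zero hv hv0 0] at h0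
  exact h0.ne hzero

theorem IsIntegralCurve.exists_tendsto_of_lojasiewicz {v : E → E} {K : ℝ≥0}
    (hv : LipschitzWith K v) (hX : IsIntegralCurve X (fun _ ↦ v)) {U : Set E} (hU : IsOpen U)
    (hf : DifferentiableOn ℝ f U) (hnonneg : ∀ x ∈ U, 0 ≤ f x) (hC : 0 < C)
    (hα : α ∈ Ioo (1 / 2) 1) (hloja : ∀ x ∈ U, C * f x ^ α ≤ ‖∇ f x‖) {ρ : ℝ} (hρ : 0 < ρ)
    (hρU : closedBall (X 0) ρ ⊆ U) (hvρ : EqOn v (-∇ f) (closedBall (X 0) ρ))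
    (hpos : 0 < f (X 0)) (hsmall : f (X 0) ^ (1 - α) < C * (1 - α) * ρ) :
    (∀ t ≥ 0, X t ∈ closedBall (X 0) ρ ∧ HasDerivAt X (-∇ f (X t)) t) ∧
      ∃ L ∈ closedBall (X 0) ρ, f L = 0 ∧ Tendsto X atTop (𝓝 L) ∧
        ∃ C' > 0, ∀ t > 0, f (X t) ≤ C' * t ^ (-(1 / (2 * α - 1))) ∧
          dist (X t) L ≤ C' * t ^ (-((1 - α) / (2 * α - 1))) := by
  have hflow : ∀ t, X t ∈ closedBall (X 0) ρ → IsLojasiewiczFlowAt f C α X t := fun t ht ↦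
    hX.isLojasiewiczFlowAt hv hU hρU hvρ hf hnonneg hloja hpos ht
  have hstay : ∀ t ≥ 0, X t ∈ closedBall (X 0) ρ := fun t ht ↦ ball_subset_closedBall <|
    mem_ball_of_isLojasiewiczFlowAt hC hα.2 hX.continuous hρ hflow hsmall t ht
  obtain ⟨L, hL, hF0, hrate⟩ :=
    exists_tendsto_of_isLojasiewiczFlowAt hC hα fun t ht ↦ hflow t (hstay t ht)
  have hLρ : L ∈ closedBall (X 0) ρ :=
    isClosed_closedBall.mem_of_tendsto hL (eventually_atTop.2 ⟨0, hstay⟩)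
  refine ⟨fun t ht ↦ ⟨hstay t ht, (hflow t (hstay t ht)).hasDerivAt⟩, L, hLρ, ?_, hL, hrate⟩
  exact tendsto_nhds_unique
    ((hf.continuousOn.continuousAt (hU.mem_nhds (hρU hLρ))).tendsto.comp hL) hF0

end GradientFlow

/-- **Convergence of the gradient flow under a Lojasiewicz inequality.**  Let `f` be a
nonnegative `C²` function on a neighborhood `U` of the origin of `ℝⁿ` with `f 0 = 0`,
satisfying `‖∇f x‖ ≥ C * (f x) ^ α` on `U` with `C > 0` and `α ∈ (1/2, 1)`.  Then there is a
neighborhood `V ⊆ U` of the origin such that for every `x₀ ∈ V` the downward gradient flow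
`ẋ = -∇f(x)`, `x 0 = x₀`, exists for all `t ≥ 0`, stays in `U`, and converges to a limit
`xlim ∈ U` with `f xlim = 0`, with the polynomial rates
`f (x t) ≤ C' t^(-1/(2α-1))` and `dist (x t) xlim ≤ C' t^(-(1-α)/(2α-1))`. -/
theorem stmt_1 (n : ℕ) (U : Set (EuclideanSpace ℝ (Fin n)))
    (hU : U ∈ nhds (0 : EuclideanSpace ℝ (Fin n)))
    (f : EuclideanSpace ℝ (Fin n) → ℝ)
    (hC2 : ContDiffOn ℝ 2 f U)
    (hnonneg : ∀ x ∈ U, 0 ≤ f x) (hf0 : f 0 = 0)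
    (C α : ℝ) (hC : 0 < C) (hα : α ∈ Set.Ioo (1/2 : ℝ) 1)
    (hloja : ∀ x ∈ U, C * (f x) ^ α ≤ ‖gradient f x‖) :
    ∃ V ∈ nhds (0 : EuclideanSpace ℝ (Fin n)), V ⊆ U ∧
      ∀ x₀ ∈ V, ∃ x : ℝ → EuclideanSpace ℝ (Fin n), x 0 = x₀ ∧
        (∀ t : ℝ, 0 ≤ t → x t ∈ U ∧ HasDerivAt x (-(gradient f (x t))) t) ∧
        ∃ xlim ∈ U, f xlim = 0 ∧ Tendsto x atTop (nhds xlim) ∧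
          ∃ C' > (0 : ℝ), ∀ t : ℝ, 0 < t →
            f (x t) ≤ C' * t ^ (-(1/(2*α-1))) ∧
            dist (x t) xlim ≤ C' * t ^ (-((1-α)/(2*α-1))) := by
  have h1α : 0 < 1 - α := by linarith [hα.2]
  obtain ⟨R, hR, hRU⟩ : ∃ R > 0, closedBall 0 (2 * R) ⊆ interior U := by
    obtain ⟨ε, hε, hεU⟩ := Metric.mem_nhds_iff.1 (interior_mem_nhds.2 hU)
    exact ⟨ε / 4, by positivity, (closedBall_subset_ball (by linarith)).trans hεU⟩
  have hRU' : closedBall 0 R ⊆ interior U := (closedBall_subset_closedBall (by linarith)).trans hRU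
  obtain ⟨v, K, M, hvLip, hvM, hv⟩ :=
    ((hC2.mono interior_subset).gradient_of_isOpen isOpen_interior (by norm_num)).neg
      |>.exists_lipschitzWith_eqOn_closedBall isOpen_interior hR (by linarith) hRU
  have hsmall : ∀ᶠ x in 𝓝 0, f x ^ (1 - α) < C * (1 - α) * (R / 2) :=
    (hC2.continuousOn.continuousAt hU).rpow_const (.inr h1α.le) |>.eventually
      (gt_mem_nhds (by simp only [hf0, zero_rpow h1α.ne']; positivity))
  refine ⟨ball 0 (R / 2) ∩ {x | f x ^ (1 - α) < C * (1 - α) * (R / 2)},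
    inter_mem (ball_mem_nhds 0 (by positivity)) hsmall, fun x hx ↦ ?_, fun x₀ hx₀ ↦ ?_⟩
  · exact interior_subset (hRU' (ball_subset_closedBall.trans
      (closedBall_subset_closedBall (by linarith)) hx.1))
  have hx₀R : closedBall x₀ (R / 2) ⊆ closedBall 0 R :=
    closedBall_subset_closedBall' (by linarith [mem_ball.1 hx₀.1])
  have hx₀U : x₀ ∈ interior U := hRU' (hx₀R (mem_closedBall_self (by positivity)))
  rcases (hnonneg x₀ (interior_subset hx₀U)).eq_or_lt with hzero | hpos
  · refine ⟨fun _ ↦ x₀, rfl, fun t _ ↦ ⟨interior_subset hx₀U, ?_⟩, x₀, interior_subset hx₀U,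
      hzero.symm, tendsto_const_nhds, 1, one_pos, fun t ht ↦ ⟨?_, ?_⟩⟩
    · simpa [gradient_eq_zero_of_forall_nonneg (mem_interior_iff_mem_nhds.1 hx₀U) hnonneg
        hzero.symm] using hasDerivAt_const t x₀
    · simp only [← hzero]; positivity
    · simp only [dist_self]; positivity
  obtain ⟨X, rfl, hX⟩ := hvLip.exists_isIntegralCurve hvM x₀
  obtain ⟨hflow, L, hL, hfL, hXL, hrate⟩ := hX.exists_tendsto_of_lojasiewicz hvLip
    isOpen_interior ((hC2.mono interior_subset).differentiableOn (by norm_num))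
    (fun x hx ↦ hnonneg x (interior_subset hx)) hC hα (fun x hx ↦ hloja x (interior_subset hx))
    (by positivity) (hx₀R.trans hRU') (hv.mono hx₀R) hpos hx₀.2
  exact ⟨X, rfl, fun t ht ↦ ⟨interior_subset (hRU' (hx₀R (hflow t ht).1)), (hflow t ht).2⟩, L,
    interior_subset (hRU' (hx₀R hL)), hfL, hXL, hrate⟩
end

section
/- Let $E$ be the Mabuchi K-energy on the space $\mathcal{H}$ of Kähler potentials of a compact Kähler manifold, satisfying (i) for any $\phi_0,\phi_1\in\mathcal{H}$, $E(\phi_1)-E(\phi_0)\leq \sqrt{Ca(\phi_1)}\, d(\phi_0,\phi_1)$ where $Ca$ is the Calabi energy, and (ii) along the Calabi flow $\phi(t)$ starting at $\phi(0)$, $\frac{d}{dt}E(\phi(t))=-Ca(\phi(t))$ and $Ca(\phi(t))\leq C(t+1)^{-1/(2\alpha-1)}$ for some $\alpha\in(1/2,3/4)$. Then $E$ is bounded below on $\mathcal{H}$, and $\inf_{\mathcal{H}} E = \lim_{t\to\infty} E(\phi(t))$. -/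
/-!
Put `q = 1 / (2 (2α - 1))`; the condition `α < 3/4` is exactly `q > 1`. Then
`√Ca(φ t) ≤ √C (t + 1)^(-q)` is integrable on `[0, ∞)`, so the flow stays within distance
`M = √C / (q - 1)` of `φ 0`, and `√Ca(φ t) → 0`. Inequality (i) at the point `φ 0` gives
`E (φ t) ≥ E (φ 0) - √Ca(φ 0) M`, and at the point `φ t` it gives
`E (φ t) ≤ E x + √Ca(φ t) (d x (φ 0) + M)` for every `x`. Letting `t → ∞`, `E` is bounded
below and `E (φ t)` tends to `inf E`.
-/

open Set Filter Topology Interval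

lemma sqrt_le_sqrt_mul_rpow_neg_half {x C b p : ℝ} (hb : 0 ≤ b) (h : x ≤ C * b ^ (-p)) :
    √x ≤ √C * b ^ (-(p / 2)) := by
  calc √x ≤ √(C * b ^ (-p)) := Real.sqrt_le_sqrt h
    _ = √C * √(b ^ (-p)) := Real.sqrt_mul' C (Real.rpow_nonneg hb _)
    _ = √C * b ^ (-(p / 2)) := by
      rw [Real.sqrt_eq_rpow (b ^ (-p)), ← Real.rpow_mul hb]
      ring_nf

lemma integral_add_one_rpow_neg_le {q t : ℝ} (hq : 1 < q) (ht : 0 ≤ t) :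
    ∫ s in (0 : ℝ)..t, (s + 1) ^ (-q) ≤ 1 / (q - 1) := by
  have h0 : (0 : ℝ) ∉ [[1, t + 1]] := by
    rw [uIcc_of_le (by linarith)]; exact fun h => absurd h.1 (by norm_num)
  rw [intervalIntegral.integral_comp_add_right (fun s => s ^ (-q)),
    integral_rpow (Or.inr ⟨by linarith, by simpa using h0⟩), zero_add, Real.one_rpow,
    ← neg_div_neg_eq, neg_sub, neg_add, neg_neg, neg_add_eq_sub]
  have hpos : 0 ≤ (t + 1) ^ (1 - q) := Real.rpow_nonneg (by linarith) _
  exact div_le_div_of_nonneg_right (by linarith) (by linarith)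

lemma intervalIntegral_le_of_le_mul_add_one_rpow_neg {f : ℝ → ℝ} {c q t : ℝ} (hq : 1 < q)
    (hc : 0 ≤ c) (ht : 0 ≤ t) (hf : ∀ s, 0 ≤ s → f s ≤ c * (s + 1) ^ (-q)) :
    ∫ s in (0 : ℝ)..t, f s ≤ c / (q - 1) := by
  by_cases hfi : IntervalIntegrable f MeasureTheory.volume 0 t
  swap
  · rw [intervalIntegral.integral_undef hfi]; exact div_nonneg hc (by linarith)
  have hgi : IntervalIntegrable (fun s => c * (s + 1) ^ (-q)) MeasureTheory.volume 0 t := by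
    refine (ContinuousOn.rpow_const (by fun_prop) fun s hs => ?_).intervalIntegrable.const_mul c
    rw [uIcc_of_le ht] at hs
    exact Or.inl (by linarith [hs.1])
  calc ∫ s in (0 : ℝ)..t, f s ≤ ∫ s in (0 : ℝ)..t, c * (s + 1) ^ (-q) :=
        intervalIntegral.integral_mono_on ht hfi hgi fun s hs => hf s hs.1
    _ = c * ∫ s in (0 : ℝ)..t, (s + 1) ^ (-q) := intervalIntegral.integral_const_mul c _
    _ ≤ c * (1 / (q - 1)) := mul_le_mul_of_nonneg_left (integral_add_one_rpow_neg_le hq ht) hc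
    _ = c / (q - 1) := mul_one_div c _

section SlopeInequality

variable {H : Type*} {d : H → H → ℝ} {E Ca : H → ℝ}

lemma le_add_sqrt_mul_of_dist_le (hdtri : ∀ x y z, d x z ≤ d x y + d y z)
    (hconv : ∀ x y, E y - E x ≤ √(Ca y) * d x y) {o y : H} {M : ℝ} (hy : d o y ≤ M) (x : H) :
    E y ≤ E x + √(Ca y) * (d x o + M) := by
  have hxy : d x y ≤ d x o + M := (hdtri x o y).trans (by linarith)
  nlinarith [hconv x y, Real.sqrt_nonneg (Ca y)]

lemma sub_sqrt_mul_le_of_dist_le (hdsymm : ∀ x y, d x y = d y x)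
    (hconv : ∀ x y, E y - E x ≤ √(Ca y) * d x y) {o y : H} {M : ℝ} (hy : d o y ≤ M) :
    E o - √(Ca o) * M ≤ E y := by
  rw [← hdsymm] at hy
  nlinarith [hconv y o, Real.sqrt_nonneg (Ca o)]

variable {ι : Type*} {l : Filter ι} {φ : ι → H} {o : H} {M : ℝ}

lemma tendsto_add_sqrt_mul (hCa : Tendsto (fun i => √(Ca (φ i))) l (𝓝 0)) (x : H) (K : ℝ) :
    Tendsto (fun i => E x + √(Ca (φ i)) * K) l (𝓝 (E x)) := by
  simpa using (hCa.mul_const K).const_add (E x)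

lemma mem_lowerBounds_range_of_tendsto_sqrt [l.NeBot] (hdsymm : ∀ x y, d x y = d y x)
    (hdtri : ∀ x y z, d x z ≤ d x y + d y z) (hconv : ∀ x y, E y - E x ≤ √(Ca y) * d x y)
    (hφ : ∀ᶠ i in l, d o (φ i) ≤ M) (hCa : Tendsto (fun i => √(Ca (φ i))) l (𝓝 0)) :
    E o - √(Ca o) * M ∈ lowerBounds (range E) := by
  rintro _ ⟨x, rfl⟩
  refine ge_of_tendsto (tendsto_add_sqrt_mul hCa x (d x o + M)) (hφ.mono fun i hi => ?_)
  exact (sub_sqrt_mul_le_of_dist_le hdsymm hconv hi).trans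
    (le_add_sqrt_mul_of_dist_le hdtri hconv hi x)

lemma tendsto_csInf_range_of_tendsto_sqrt (hdtri : ∀ x y z, d x z ≤ d x y + d y z)
    (hconv : ∀ x y, E y - E x ≤ √(Ca y) * d x y) (hbdd : BddBelow (range E))
    (hφ : ∀ᶠ i in l, d o (φ i) ≤ M) (hCa : Tendsto (fun i => √(Ca (φ i))) l (𝓝 0)) :
    Tendsto (fun i => E (φ i)) l (𝓝 (sInf (range E))) := by
  refine tendsto_order.2 ⟨fun a ha => .of_forall fun i => ha.trans_le (csInf_le hbdd ⟨φ i, rfl⟩),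
    fun a ha => ?_⟩
  obtain ⟨_, ⟨x, rfl⟩, hx⟩ := exists_lt_of_csInf_lt (range_nonempty_iff_nonempty.2 ⟨o⟩) ha
  filter_upwards [(tendsto_add_sqrt_mul hCa x (d x o + M)).eventually (gt_mem_nhds hx), hφ]
    with i hlt hi using (le_add_sqrt_mul_of_dist_le hdtri hconv hi x).trans_lt hlt

end SlopeInequality

theorem stmt_14_general {H : Type*} (d : H → H → ℝ) (E Ca : H → ℝ)
    (hdsymm : ∀ x y, d x y = d y x)
    (hdtri : ∀ x y z, d x z ≤ d x y + d y z)
    (hconv : ∀ x y : H, E y - E x ≤ Real.sqrt (Ca y) * d x y)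
    (φ : ℝ → H) (α C : ℝ) (hα₁ : 1/2 < α) (hα₂ : α < 3/4)
    (hCaDecay : ∀ t : ℝ, 0 ≤ t → Ca (φ t) ≤ C * (t + 1) ^ (-(1/(2*α - 1))))
    (hlen : ∀ t : ℝ, 0 ≤ t → d (φ 0) (φ t) ≤ ∫ s in (0:ℝ)..t, Real.sqrt (Ca (φ s))) :
    BddBelow (Set.range E) ∧
    ∃ L : ℝ, IsGLB (Set.range E) L ∧
      Tendsto (fun t => E (φ t)) atTop (nhds L) := by
  set q := 1 / (2 * α - 1) / 2
  have hq : 1 < q := by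
    rw [lt_div_iff₀ two_pos, lt_div_iff₀ (by linarith)]; linarith
  have hsqrt : ∀ t, 0 ≤ t → √(Ca (φ t)) ≤ √C * (t + 1) ^ (-q) := fun t ht =>
    sqrt_le_sqrt_mul_rpow_neg_half (by linarith) (hCaDecay t ht)
  have hdist : ∀ᶠ t in atTop, d (φ 0) (φ t) ≤ √C / (q - 1) :=
    eventually_atTop.2 ⟨0, fun t ht => (hlen t ht).trans
      (intervalIntegral_le_of_le_mul_add_one_rpow_neg hq (Real.sqrt_nonneg _) ht hsqrt)⟩
  have hCa : Tendsto (fun t => √(Ca (φ t))) atTop (𝓝 0) := by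
    have hdecay : Tendsto (fun t : ℝ => √C * (t + 1) ^ (-q)) atTop (𝓝 0) := by
      simpa using ((tendsto_rpow_neg_atTop (by linarith)).comp
        (tendsto_atTop_add_const_right _ 1 tendsto_id)).const_mul √C
    exact squeeze_zero' (.of_forall fun _ => Real.sqrt_nonneg _) (eventually_atTop.2 ⟨0, hsqrt⟩)
      hdecay
  have hbdd : BddBelow (range E) :=
    ⟨_, mem_lowerBounds_range_of_tendsto_sqrt hdsymm hdtri hconv hdist hCa⟩
  exact ⟨hbdd, _, isGLB_csInf ⟨E (φ 0), φ 0, rfl⟩ hbdd,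
    tendsto_csInf_range_of_tendsto_sqrt hdtri hconv hbdd hdist hCa⟩

/-- **Lower bound of the Mabuchi K-energy along the Calabi flow.**
Abstractly, `H` is the space of Kähler potentials with the Mabuchi distance `d`, `E` the
K-energy and `Ca` the Calabi energy, satisfying:
(i) `E φ₁ - E φ₀ ≤ √(Ca φ₁) · d(φ₀, φ₁)` for all `φ₀, φ₁`;
(ii) along the Calabi flow `φ(t)`, `dE(φ(t))/dt = -Ca(φ(t))` and
`Ca(φ(t)) ≤ C (t+1)^{-1/(2α-1)}` with `α ∈ (1/2, 3/4)`;
moreover the flow-length bound `d(φ(0), φ(t)) ≤ ∫₀ᵗ √(Ca(φ(s))) ds` holds.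
Then `E` is bounded below on `H` and `inf_H E = lim_{t→∞} E(φ(t))`. -/
theorem stmt_14 {H : Type*} (d : H → H → ℝ) (E Ca : H → ℝ)
    (hd0 : ∀ x, d x x = 0) (hdsymm : ∀ x y, d x y = d y x)
    (hdtri : ∀ x y z, d x z ≤ d x y + d y z) (hdnn : ∀ x y, 0 ≤ d x y)
    (hCann : ∀ x, 0 ≤ Ca x)
    (hconv : ∀ x y : H, E y - E x ≤ Real.sqrt (Ca y) * d x y)
    (φ : ℝ → H) (α C : ℝ) (hα₁ : 1/2 < α) (hα₂ : α < 3/4) (hC : 0 < C)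
    (hE : ∀ t : ℝ, 0 ≤ t → HasDerivAt (fun s => E (φ s)) (-(Ca (φ t))) t)
    (hCaDecay : ∀ t : ℝ, 0 ≤ t → Ca (φ t) ≤ C * (t + 1) ^ (-(1/(2*α - 1))))
    (hlen : ∀ t : ℝ, 0 ≤ t → d (φ 0) (φ t) ≤ ∫ s in (0:ℝ)..t, Real.sqrt (Ca (φ s))) :
    BddBelow (Set.range E) ∧
    ∃ L : ℝ, IsGLB (Set.range E) L ∧
      Tendsto (fun t => E (φ t)) atTop (nhds L) :=
  stmt_14_general d E Ca hdsymm hdtri hconv φ α C hα₁ hα₂ hCaDecay hlen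
end

section
/- Let $H$ be a real Hilbert space with orthogonal decomposition $H = W_0\oplus W'$, where $W_0$ is finite-dimensional, and let $\widetilde{Ca}: U\to[0,\infty)$ be a smooth function on a neighborhood $U$ of $0$ with $\widetilde{Ca}(0)=0$, $\nabla\widetilde{Ca}(0)=0$, whose Hessian $H_0$ at $0$ vanishes on $W_0$ and satisfies $\|H_0\mu'\|\geq c\|\mu'\|$ for $\mu'\in W'$ (in appropriate norms). Suppose there is a smooth map $G: B_{\epsilon}(W_0)\to W'$ with $G(0)=0$, $DG(0)=0$, such that $\nabla\widetilde{Ca}(\mu_0+G(\mu_0))\in W_0$ for all $\mu_0$, and the function $f(\mu_0)=\widetilde{Ca}(\mu_0+G(\mu_0))$ satisfies a Lojasiewicz inequality $|\nabla f(\mu_0)|\geq C|f(\mu_0)|^{\alpha}$ with $\alpha\in[1/2,1)$. Then, in a possibly smaller neighborhood of $0$, $\widetilde{Ca}$ itself satisfies $\|\nabla\widetilde{Ca}(\mu)\| \geq C'\,\widetilde{Ca}(\mu)^{\alpha}$. -/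
open Filter
open scoped RealInnerProductSpace ContDiff

private lemma aux_rpow_add {a b p : ℝ} (ha : 0 ≤ a) (hb : 0 ≤ b) (hp : 0 ≤ p) (hp1 : p ≤ 1) :
    (a + b) ^ p ≤ a ^ p + b ^ p := by
  lift a to NNReal using ha
  lift b to NNReal using hb
  exact_mod_cast NNReal.rpow_add_le_add_rpow a b hp hp1

private lemma aux_sq_rpow {t p : ℝ} (ht : 0 ≤ t) (ht1 : t ≤ 1) (hp : 1/2 ≤ p) :
    (t * t) ^ p ≤ t := by
  rcases eq_or_lt_of_le ht with h | h
  · rw [← h, mul_zero, Real.zero_rpow (by linarith)]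
  · have h2 : t * t = t ^ ((2 : ℝ)) := by
      rw [show (2:ℝ) = ((2:ℕ):ℝ) by norm_num, Real.rpow_natCast]; ring
    rw [h2, ← Real.rpow_mul ht]
    calc t ^ (2 * p) ≤ t ^ (1:ℝ) :=
          Real.rpow_le_rpow_of_exponent_ge h ht1 (by linarith)
      _ = t := Real.rpow_one t

set_option maxHeartbeats 1000000 in
/-- **Lyapunov–Schmidt reduction of the Lojasiewicz inequality (Theorem 5.5, key step).**
Let `H = W₀ ⊕ W₀ᗮ` be a real Hilbert space with `W₀` finite-dimensional, and let
`Ca : U → [0,∞)` be smooth near `0` with `Ca 0 = 0`, `∇Ca 0 = 0`, whose Hessian `H₀` at `0`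
vanishes on `W₀` and is coercive on `W₀ᗮ`.  Suppose `G : B_ε(W₀) → W₀ᗮ` is smooth with
`G 0 = 0`, `DG 0 = 0` and `∇Ca(μ₀ + G μ₀) ∈ W₀`, and the reduced function
`f(μ₀) = Ca(μ₀ + G μ₀)` satisfies the Lojasiewicz inequality
`‖∇f(μ₀)‖ ≥ C |f μ₀|^α` with `α ∈ [1/2, 1)`.  Then on a possibly smaller neighborhood of
`0` in `H`, `Ca` itself satisfies `‖∇Ca(μ)‖ ≥ C' (Ca μ)^α`. -/
theorem stmt_17 {H : Type*} [NormedAddCommGroup H] [InnerProductSpace ℝ H] [CompleteSpace H]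
    (W₀ : Submodule ℝ H) [FiniteDimensional ℝ W₀]
    (U : Set H) (hU : U ∈ nhds (0 : H))
    (Ca : H → ℝ) (hsmooth : ContDiffOn ℝ (⊤ : ℕ∞) Ca U)
    (hCa0 : Ca 0 = 0) (hCann : ∀ x ∈ U, 0 ≤ Ca x) (hgrad0 : gradient Ca 0 = 0)
    (H₀ : H →L[ℝ] H) (hHess : HasFDerivAt (gradient Ca) H₀ 0)
    (hH₀W₀ : ∀ w ∈ W₀, H₀ w = 0)
    (c : ℝ) (hc : 0 < c) (hcoer : ∀ w ∈ W₀ᗮ, c * ‖w‖ ≤ ‖H₀ w‖)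
    (ε : ℝ) (hε : 0 < ε)
    (G : W₀ → W₀ᗮ)
    (hGsmooth : ContDiff ℝ (⊤ : ℕ∞) fun μ₀ : W₀ => ((G μ₀ : H)))
    (hG0 : G 0 = 0)
    (hDG0 : fderiv ℝ (fun μ₀ : W₀ => ((G μ₀ : H))) 0 = 0)
    (hball : ∀ μ₀ : W₀, ‖μ₀‖ < ε → ((μ₀ : H) + (G μ₀ : H)) ∈ U)
    (hcrit : ∀ μ₀ : W₀, ‖μ₀‖ < ε → gradient Ca ((μ₀ : H) + (G μ₀ : H)) ∈ W₀)
    (C α : ℝ) (hC : 0 < C) (hα : α ∈ Set.Ico (1/2 : ℝ) 1)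
    (hloja : ∀ μ₀ : W₀, ‖μ₀‖ < ε →
      C * |Ca ((μ₀ : H) + (G μ₀ : H))| ^ α ≤
        ‖gradient (fun ν : W₀ => Ca ((ν : H) + (G ν : H))) μ₀‖) :
    ∃ C' > (0 : ℝ), ∃ V ∈ nhds (0 : H), V ⊆ U ∧
      ∀ μ ∈ V, C' * (Ca μ) ^ α ≤ ‖gradient Ca μ‖ := by
  obtain ⟨hα₂, hα₁⟩ := hα
  have hα0 : (0:ℝ) ≤ α := by linarith
  -- the open set on which everything is smooth
  set O : Set H := interior U with hOdef
  have hOopen : IsOpen O := isOpen_interior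
  have hO0 : (0:H) ∈ O := mem_interior_iff_mem_nhds.2 hU
  have hOU : O ⊆ U := interior_subset
  have hsm : ContDiffOn ℝ ∞ Ca O := (hsmooth.of_le (by simp)).mono hOU
  have hdiff : ∀ x ∈ O, DifferentiableAt ℝ Ca x := fun x hx =>
    (hsm.differentiableOn (by simp)).differentiableAt (hOopen.mem_nhds hx)
  -- the Riesz map as a genuinely ℝ-linear continuous map
  let L : H →L[ℝ] (H →L[ℝ] ℝ) :=
    { toFun := fun x => innerSL ℝ x
      map_add' := fun x y => by ext z; simp [inner_add_left]
      map_smul' := fun r x => by ext z; simp [inner_smul_left]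
      cont := (innerSL ℝ).continuous }
  have hLapp : ∀ x y : H, L x y = ⟪x, y⟫ := fun x y => rfl
  have hLdual : ∀ x : H, L x = InnerProductSpace.toDual ℝ H x := by
    intro x; ext y; simp [hLapp, InnerProductSpace.toDual_apply_apply]
  have hLnorm : ∀ x : H, ‖L x‖ = ‖x‖ := fun x => by
    rw [hLdual x]; exact LinearIsometryEquiv.norm_map _ _
  have hfd : ∀ x : H, fderiv ℝ Ca x = L (gradient Ca x) := by
    intro x
    rw [hLdual, gradient, LinearIsometryEquiv.apply_symm_apply]
  -- the derivative of the (dual-valued) gradient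
  have hFsm : ContDiffOn ℝ ∞ (fderiv ℝ Ca) O :=
    hsm.fderiv_of_isOpen (m := ∞) hOopen (le_of_eq rfl)
  have hFdiff : ∀ x ∈ O, HasFDerivAt (fderiv ℝ Ca) (fderiv ℝ (fderiv ℝ Ca) x) x := fun x hx =>
    ((hFsm.differentiableOn (by simp)).differentiableAt
      (hOopen.mem_nhds hx)).hasFDerivAt
  have hF'cont : ContinuousOn (fderiv ℝ (fderiv ℝ Ca)) O :=
    ((hFsm.fderiv_of_isOpen (m := ∞) hOopen (le_of_eq rfl)).continuousOn)
  have hFeq : (fderiv ℝ Ca) = fun x => L (gradient Ca x) := funext hfd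
  have hF0 : HasFDerivAt (fderiv ℝ Ca) (L.comp H₀) 0 := by
    rw [hFeq]
    exact (L.hasFDerivAt).comp 0 hHess
  have hF'0 : fderiv ℝ (fderiv ℝ Ca) 0 = L.comp H₀ := hF0.fderiv
  -- symmetry of the Hessian
  have hsym : ∀ v w : H, ⟪H₀ v, w⟫ = ⟪v, H₀ w⟫ := by
    intro v w
    have hev : ∀ᶠ y in nhds (0:H), HasFDerivAt Ca (fderiv ℝ Ca y) y :=
      Filter.eventually_of_mem (hOopen.mem_nhds hO0) (fun y hy => (hdiff y hy).hasFDerivAt)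
    have h := second_derivative_symmetric_of_eventually_of_real hev hF0 v w
    have h' : ⟪H₀ v, w⟫ = ⟪H₀ w, v⟫ := h
    rw [h', real_inner_comm]
  have hH₀perp : ∀ x ∈ W₀ᗮ, H₀ x ∈ W₀ᗮ := by
    intro x hx
    rw [Submodule.mem_orthogonal]
    intro u hu
    calc ⟪u, H₀ x⟫ = ⟪H₀ u, x⟫ := (hsym u x).symm
      _ = 0 := by rw [hH₀W₀ u hu, inner_zero_left]
  -- choose the radius r
  set δ : ℝ := c / 2 with hδdef
  have hδ : 0 < δ := by positivity
  have hcontF' : ContinuousAt (fderiv ℝ (fderiv ℝ Ca)) 0 :=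
    hF'cont.continuousAt (hOopen.mem_nhds hO0)
  have hev2 : ∀ᶠ x in nhds (0:H), ‖fderiv ℝ (fderiv ℝ Ca) x - L.comp H₀‖ ≤ δ := by
    have : ∀ᶠ x in nhds (0:H), dist (fderiv ℝ (fderiv ℝ Ca) x) (fderiv ℝ (fderiv ℝ Ca) 0) < δ :=
      hcontF'.tendsto (show Metric.ball (fderiv ℝ (fderiv ℝ Ca) 0) δ ∈ nhds (fderiv ℝ (fderiv ℝ Ca) 0) from
        Metric.ball_mem_nhds (α := H →L[ℝ] H →L[ℝ] ℝ) _ hδ)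
    filter_upwards [this] with x hx
    rw [dist_eq_norm (fderiv ℝ (fderiv ℝ Ca) x) (fderiv ℝ (fderiv ℝ Ca) 0), hF'0] at hx
    exact hx.le
  obtain ⟨r, hr, hrball⟩ :=
    Metric.mem_nhds_iff.1 (Filter.inter_mem hev2 (hOopen.mem_nhds hO0))
  have hrO : Metric.ball (0:H) r ⊆ O := fun x hx => (hrball hx).2
  have hrδ : ∀ x ∈ Metric.ball (0:H) r, ‖fderiv ℝ (fderiv ℝ Ca) x - L.comp H₀‖ ≤ δ :=
    fun x hx => (hrball hx).1
  -- key mean value estimate for the gradient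
  have key : ∀ x ∈ Metric.ball (0:H) r, ∀ y ∈ Metric.ball (0:H) r,
      ‖gradient Ca y - gradient Ca x - H₀ (y - x)‖ ≤ δ * ‖y - x‖ := by
    intro x hx y hy
    have hs : Convex ℝ (Metric.ball (0:H) r) := convex_ball 0 r
    have hmvt := hs.norm_image_sub_le_of_norm_hasFDerivWithin_le
      (f := fun z => fderiv ℝ Ca z - (L.comp H₀) z)
      (f' := fun z => fderiv ℝ (fderiv ℝ Ca) z - L.comp H₀)
      (fun z hz => ((hFdiff z (hrO hz)).sub ((L.comp H₀).hasFDerivAt)).hasFDerivWithinAt)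
      hrδ hx hy
    have heq : (fderiv ℝ Ca y - (L.comp H₀) y) - (fderiv ℝ Ca x - (L.comp H₀) x)
        = L (gradient Ca y - gradient Ca x - H₀ (y - x)) := by
      rw [hfd x, hfd y]
      simp only [map_sub, ContinuousLinearMap.coe_comp', Function.comp_apply]
      abel
    rw [heq, hLnorm] at hmvt
    exact hmvt
  -- the graph map
  set γ : W₀ → H := fun ν => ((G ν : H)) with hγdef
  have hγdiff : Differentiable ℝ γ := hGsmooth.differentiable (by simp)
  have hγmem : ∀ ν : W₀, γ ν ∈ W₀ᗮ := fun ν => (G ν).2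
  have hγ0 : γ 0 = 0 := by simp [hγdef, hG0]
  have hDγmem : ∀ (ν₀ v : W₀), fderiv ℝ γ ν₀ v ∈ W₀ᗮ := by
    intro ν₀ v
    rw [Submodule.mem_orthogonal]
    intro u hu
    have hzero : (fun ν : W₀ => ⟪u, γ ν⟫) = fun _ => (0:ℝ) :=
      funext fun ν => (Submodule.mem_orthogonal W₀ (γ ν)).1 (hγmem ν) u hu
    have h1 : HasFDerivAt (fun ν : W₀ => ⟪u, γ ν⟫)
        ((innerSL ℝ u).comp (fderiv ℝ γ ν₀)) ν₀ :=
      (innerSL ℝ u).hasFDerivAt.comp ν₀ (hγdiff ν₀).hasFDerivAt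
    rw [hzero] at h1
    have h2 := h1.unique (hasFDerivAt_const (0:ℝ) ν₀)
    have h3 := congrArg (fun T : W₀ →L[ℝ] ℝ => T v) h2
    simpa using h3
  -- gradient of the reduced function
  have hredgrad : ∀ μ₀ : W₀, ∀ (hh : ‖μ₀‖ < ε), ((μ₀ : H) + γ μ₀) ∈ O →
      gradient (fun ν : W₀ => Ca ((ν : H) + (G ν : H))) μ₀
        = ⟨gradient Ca ((μ₀ : H) + γ μ₀), hcrit μ₀ hh⟩ := by
    intro μ₀ hμ₀ε hνO
    set ν : H := (μ₀ : H) + γ μ₀ with hνdef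
    have ha_mem : gradient Ca ν ∈ W₀ := hcrit μ₀ hμ₀ε
    have hψ : HasFDerivAt (fun ν' : W₀ => ((ν' : H) + γ ν'))
        (W₀.subtypeL + fderiv ℝ γ μ₀) μ₀ :=
      (W₀.subtypeL.hasFDerivAt).add (hγdiff μ₀).hasFDerivAt
    have hchain : HasFDerivAt (fun ν' : W₀ => Ca ((ν' : H) + (G ν' : H)))
        ((fderiv ℝ Ca ν).comp (W₀.subtypeL + fderiv ℝ γ μ₀)) μ₀ :=
      ((hdiff ν hνO).hasFDerivAt).comp μ₀ hψ
    have hgr : HasGradientAt (fun ν' : W₀ => Ca ((ν' : H) + (G ν' : H)))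
        (⟨gradient Ca ν, ha_mem⟩ : W₀) μ₀ := by
      rw [hasGradientAt_iff_hasFDerivAt]
      refine hchain.congr_fderiv ?_
      ext v
      rw [InnerProductSpace.toDual_apply_apply, Submodule.coe_inner]
      rw [ContinuousLinearMap.coe_comp', Function.comp_apply]
      rw [hfd ν, hLapp]
      have hv : (W₀.subtypeL + fderiv ℝ γ μ₀) v = (v : H) + fderiv ℝ γ μ₀ v := rfl
      rw [hv, inner_add_right]
      have : ⟪gradient Ca ν, fderiv ℝ γ μ₀ v⟫ = 0 :=
        (Submodule.mem_orthogonal W₀ (fderiv ℝ γ μ₀ v)).1 (hDγmem μ₀ v) _ ha_mem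
      rw [this, add_zero]
    exact hgr.gradient
  -- constants
  set K : ℝ := ‖H₀‖ + δ with hKdef
  have hK : 0 < K := by positivity
  have hKα : 0 < K ^ α := Real.rpow_pos_of_pos hK α
  set S : ℝ := 2 / C + K ^ α * (2 / c) with hSdef
  have hS : 0 < S := by positivity
  refine ⟨S⁻¹, by positivity, ?_⟩
  -- the neighborhood
  set P : H → W₀ := fun μ => W₀.orthogonalProjectionOnto μ with hPdef
  have hPcont : Continuous P := (W₀.orthogonalProjectionOnto).continuous
  set Φ : H → H := fun μ => ((P μ : H) + γ (P μ)) with hΦdef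
  have hΦcont : Continuous Φ :=
    ((W₀.subtypeL.continuous.comp hPcont).add (hGsmooth.continuous.comp hPcont))
  set V : Set H := {μ | ‖P μ‖ < ε ∧ ‖Φ μ‖ + ‖μ - Φ μ‖ < min r 1} with hVdef
  have hΦ0 : Φ 0 = 0 := by
    simp only [hΦdef, hPdef, map_zero, hγ0]
    simp
  have hVopen : IsOpen V := by
    apply IsOpen.inter
    · exact isOpen_lt (continuous_norm.comp hPcont) continuous_const
    · exact isOpen_lt ((continuous_norm.comp hΦcont).add
        (continuous_norm.comp (continuous_id.sub hΦcont))) continuous_const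
  have hV0 : (0:H) ∈ V := by
    constructor
    · simp [hPdef, hε]
    · simp only [hΦ0, sub_zero, norm_zero, add_zero]
      exact lt_min hr one_pos
  have hVr : ∀ μ ∈ V, μ ∈ Metric.ball (0:H) r := by
    intro μ hμ
    rw [Metric.mem_ball, dist_zero_right]
    calc ‖μ‖ = ‖Φ μ + (μ - Φ μ)‖ := by rw [add_sub_cancel]
      _ ≤ ‖Φ μ‖ + ‖μ - Φ μ‖ := norm_add_le _ _
      _ < min r 1 := hμ.2
      _ ≤ r := min_le_left _ _
  have hVU : V ⊆ U := fun μ hμ => hOU (hrO (hVr μ hμ))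
  refine ⟨V, hVopen.mem_nhds hV0, hVU, ?_⟩
  -- the main estimate
  intro μ hμ
  obtain ⟨hμ₀ε, hμsum⟩ := hμ
  set μ₀ : W₀ := P μ with hμ₀def
  set ν : H := Φ μ with hνdef
  set μ' : H := μ - ν with hμ'def
  set t : ℝ := ‖μ'‖ with htdef
  set a : H := gradient Ca ν with hadef
  set n : ℝ := ‖gradient Ca μ‖ with hndef
  have ht0 : 0 ≤ t := norm_nonneg _
  have hνU : ν ∈ U := hball μ₀ hμ₀ε
  have ha_mem : a ∈ W₀ := hcrit μ₀ hμ₀ε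
  have hνball : ν ∈ Metric.ball (0:H) r := by
    rw [Metric.mem_ball, dist_zero_right]
    calc ‖ν‖ ≤ ‖ν‖ + ‖μ - ν‖ := le_add_of_nonneg_right (norm_nonneg _)
      _ < min r 1 := hμsum
      _ ≤ r := min_le_left _ _
  have hμball : μ ∈ Metric.ball (0:H) r := hVr μ ⟨hμ₀ε, hμsum⟩
  have ht1 : t ≤ 1 := by
    have : ‖ν‖ + t < min r 1 := hμsum
    have h2 : min r 1 ≤ 1 := min_le_right _ _
    have h3 : 0 ≤ ‖ν‖ := norm_nonneg _
    linarith
  have hμ'perp : μ' ∈ W₀ᗮ := by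
    have : μ' = (μ - ((W₀.orthogonalProjectionOnto μ : W₀) : H)) - γ μ₀ := by
      simp only [hμ'def, hνdef, hΦdef, hμ₀def, hPdef]
      abel
    rw [this]
    exact Submodule.sub_mem _ (W₀.sub_starProjection_mem_orthogonal μ) (hγmem μ₀)
  have hinner_aμ' : ⟪a, μ'⟫ = 0 :=
    (Submodule.mem_orthogonal W₀ μ').1 hμ'perp a ha_mem
  set b : H := H₀ μ' with hbdef
  have hbperp : b ∈ W₀ᗮ := hH₀perp μ' hμ'perp
  have horth : ⟪a, b⟫ = 0 := (Submodule.mem_orthogonal W₀ b).1 hbperp a ha_mem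
  have key1 : ‖gradient Ca μ - a - b‖ ≤ δ * t := by
    have := key ν hνball μ hμball
    simpa [hadef, hbdef, hμ'def, htdef] using this
  have hsumab : ‖a + b‖ ≤ n + δ * t := by
    calc ‖a + b‖ = ‖gradient Ca μ - (gradient Ca μ - a - b)‖ := by abel_nf
      _ ≤ ‖gradient Ca μ‖ + ‖gradient Ca μ - a - b‖ := norm_sub_le _ _
      _ ≤ n + δ * t := by rw [hndef]; exact add_le_add_right key1 _
  have habsq : ‖a + b‖ ^ 2 = ‖a‖ ^ 2 + ‖b‖ ^ 2 := by
    rw [norm_add_sq_real, horth]; ring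
  have ha_le : ‖a‖ ≤ ‖a + b‖ := by
    have h : ‖a‖ ^ 2 ≤ ‖a + b‖ ^ 2 := by rw [habsq]; linarith [sq_nonneg ‖b‖]
    exact (pow_le_pow_iff_left₀ (norm_nonneg a) (norm_nonneg _) two_ne_zero).1 h
  have hb_le : ‖b‖ ≤ ‖a + b‖ := by
    have h : ‖b‖ ^ 2 ≤ ‖a + b‖ ^ 2 := by rw [habsq]; linarith [sq_nonneg ‖a‖]
    exact (pow_le_pow_iff_left₀ (norm_nonneg b) (norm_nonneg _) two_ne_zero).1 h
  have hb_lower : c * t ≤ ‖b‖ := hcoer μ' hμ'perp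
  have hn0 : 0 ≤ n := norm_nonneg _
  have hμ'n : (c / 2) * t ≤ n := by
    have : c * t ≤ n + δ * t := le_trans hb_lower (le_trans hb_le hsumab)
    rw [hδdef] at this
    linarith
  have ha2n : ‖a‖ ≤ 2 * n := by
    have h1 : ‖a‖ ≤ n + δ * t := le_trans ha_le hsumab
    rw [hδdef] at h1
    linarith
  -- value estimate : Ca μ ≤ Ca ν + K * t * t
  have hval : Ca μ ≤ Ca ν + K * t * t := by
    have hs : Convex ℝ (Metric.ball (0:H) r) := convex_ball 0 r
    have hbound : ∀ z ∈ Metric.ball (0:H) r, z ∈ segment ℝ ν μ →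
        ‖fderiv ℝ Ca z - innerSL ℝ a‖ ≤ K * t := by
      intro z hz hzseg
      have h1 : ‖gradient Ca z - a - H₀ (z - ν)‖ ≤ δ * ‖z - ν‖ := key ν hνball z hz
      obtain ⟨θ, hθ, hθz⟩ := by
        rw [segment_eq_image'] at hzseg; exact hzseg
      have hzν : z - ν = θ • μ' := by
        rw [← hθz]; simp [hμ'def]
      have hzνnorm : ‖z - ν‖ ≤ t := by
        rw [hzν, norm_smul, Real.norm_eq_abs, abs_of_nonneg hθ.1]
        calc θ * t ≤ 1 * t := mul_le_mul_of_nonneg_right hθ.2 ht0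
          _ = t := one_mul t
      have h2 : ‖gradient Ca z - a‖ ≤ K * t := by
        calc ‖gradient Ca z - a‖
            = ‖(gradient Ca z - a - H₀ (z - ν)) + H₀ (z - ν)‖ := by abel_nf
          _ ≤ ‖gradient Ca z - a - H₀ (z - ν)‖ + ‖H₀ (z - ν)‖ := norm_add_le _ _
          _ ≤ δ * ‖z - ν‖ + ‖H₀‖ * ‖z - ν‖ := add_le_add h1 (H₀.le_opNorm _)
          _ = (‖H₀‖ + δ) * ‖z - ν‖ := by ring
          _ ≤ (‖H₀‖ + δ) * t := by
              apply mul_le_mul_of_nonneg_left hzνnorm (by positivity)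
          _ = K * t := by rw [hKdef]
      have heq : fderiv ℝ Ca z - innerSL ℝ a = L (gradient Ca z - a) := by
        rw [hfd z]
        ext y
        simp only [ContinuousLinearMap.coe_sub', Pi.sub_apply, hLapp, innerSL_apply_apply,
          inner_sub_left]
      rw [heq, hLnorm]
      exact h2
    have hseg : segment ℝ ν μ ⊆ Metric.ball (0:H) r := hs.segment_subset hνball hμball
    have hmvt := (convex_segment ν μ).norm_image_sub_le_of_norm_hasFDerivWithin_le
      (f := fun z => Ca z - ⟪a, z⟫)
      (f' := fun z => fderiv ℝ Ca z - innerSL ℝ a)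
      (fun z hz => (((hdiff z (hrO (hseg hz))).hasFDerivAt).sub
        (innerSL ℝ a).hasFDerivAt).hasFDerivWithinAt)
      (fun z hz => hbound z (hseg hz) hz)
      (left_mem_segment ℝ ν μ) (right_mem_segment ℝ ν μ)
    have hinner_diff : ⟪a, μ⟫ - ⟪a, ν⟫ = 0 := by
      rw [← inner_sub_right]
      exact hinner_aμ'
    rw [Real.norm_eq_abs] at hmvt
    have habs : |Ca μ - Ca ν| ≤ K * t * t := by
      have : Ca μ - ⟪a, μ⟫ - (Ca ν - ⟪a, ν⟫) = Ca μ - Ca ν := by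
        have := hinner_diff; linarith
      rw [this] at hmvt
      calc |Ca μ - Ca ν| ≤ K * t * ‖μ - ν‖ := hmvt
        _ = K * t * t := by rw [← hμ'def, ← htdef]
    have := abs_le.1 habs
    linarith [this.2]
  -- Lojasiewicz for the reduced function
  have hred : C * (Ca ν) ^ α ≤ ‖a‖ := by
    have h1 := hloja μ₀ hμ₀ε
    have h2 : gradient (fun ν' : W₀ => Ca ((ν' : H) + (G ν' : H))) μ₀
        = ⟨a, ha_mem⟩ := hredgrad μ₀ hμ₀ε (hrO hνball)
    rw [h2] at h1
    have h3 : ‖(⟨a, ha_mem⟩ : W₀)‖ = ‖a‖ := rfl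
    rw [h3] at h1
    have h4 : |Ca ((μ₀ : H) + (G μ₀ : H))| = Ca ν := abs_of_nonneg (hCann ν hνU)
    rwa [h4] at h1
  have hCaν0 : 0 ≤ Ca ν := hCann ν hνU
  have hCaμ0 : 0 ≤ Ca μ := hCann μ (hVU ⟨hμ₀ε, hμsum⟩)
  -- put everything together
  have hchain : (Ca μ) ^ α ≤ S * n := by
    have h1 : (Ca μ) ^ α ≤ (Ca ν + K * t * t) ^ α :=
      Real.rpow_le_rpow hCaμ0 hval hα0
    have h2 : (Ca ν + K * t * t) ^ α ≤ (Ca ν) ^ α + (K * t * t) ^ α :=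
      aux_rpow_add hCaν0 (by positivity) hα0 hα₁.le
    have h3 : (K * t * t) ^ α = K ^ α * (t * t) ^ α := by
      rw [mul_assoc, Real.mul_rpow hK.le (by positivity)]
    have h4 : (t * t) ^ α ≤ t := aux_sq_rpow ht0 ht1 hα₂
    have h5 : t ≤ (2 / c) * n := by
      rw [div_mul_eq_mul_div, le_div_iff₀ hc]
      linarith [hμ'n]
    have h6 : (Ca ν) ^ α ≤ (2 / C) * n := by
      rw [div_mul_eq_mul_div, le_div_iff₀ hC]
      calc (Ca ν) ^ α * C = C * (Ca ν) ^ α := mul_comm _ _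
        _ ≤ ‖a‖ := hred
        _ ≤ 2 * n := ha2n
    calc (Ca μ) ^ α ≤ (Ca ν) ^ α + (K * t * t) ^ α := le_trans h1 h2
      _ = (Ca ν) ^ α + K ^ α * (t * t) ^ α := by rw [h3]
      _ ≤ (2 / C) * n + K ^ α * ((2 / c) * n) := by
          apply add_le_add h6
          exact mul_le_mul_of_nonneg_left (le_trans h4 h5) hKα.le
      _ = S * n := by rw [hSdef]; ring
  calc S⁻¹ * (Ca μ) ^ α ≤ S⁻¹ * (S * n) :=
        mul_le_mul_of_nonneg_left hchain (by positivity)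
    _ = n := by field_simp
end

section
/- Let $(X,d)$ be a uniquely geodesic, non-positively curved (in the sense of Alexandrov) complete metric space and let $\Phi_t: X\to X$ be a semiflow that is distance-nonincreasing: $d(\Phi_t(x),\Phi_t(y))\leq d(x,y)$ for all $t\geq 0$. Suppose $x_1, x_2\in X$ and $\Phi_t(x_i)$ is asymptotic to a geodesic ray $\chi_i$ for $i=1,2$. Then $\chi_1$ and $\chi_2$ are parallel: $\sup_t d(\chi_1(t),\chi_2(t))<\infty$. -/
/-- `σ` is a unit-speed geodesic segment from `x` to `y`. -/
def UnitGeodFromTo {X : Type*} [MetricSpace X] (σ : ℝ → X) (x y : X) : Prop :=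
  σ 0 = x ∧ σ (dist x y) = y ∧
    ∀ s ∈ Set.Icc (0 : ℝ) (dist x y), ∀ t ∈ Set.Icc (0 : ℝ) (dist x y),
      dist (σ s) (σ t) = |s - t|

/-- `χ` is a unit-speed geodesic ray. -/
def IsGeodesicRay {X : Type*} [MetricSpace X] (χ : ℝ → X) : Prop :=
  ∀ s t : ℝ, 0 ≤ s → 0 ≤ t → dist (χ s) (χ t) = |s - t|

/-- `γ` is asymptotic to the geodesic ray `χ`: for every fixed `s > 0`, the point at arc-length
parameter `s` on the unit-speed geodesic from `χ 0` to `γ t` converges to `χ s` as `t → ∞`. -/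
def IsAsymptoticTo {X : Type*} [MetricSpace X] (γ χ : ℝ → X) : Prop :=
  IsGeodesicRay χ ∧
    ∀ s > (0 : ℝ), ∀ ε > (0 : ℝ), ∃ T : ℝ, ∀ t ≥ T,
      s ≤ dist (χ 0) (γ t) ∧
      ∀ σ : ℝ → X, UnitGeodFromTo σ (χ 0) (γ t) → dist (σ s) (χ s) ≤ ε

/-- Every pair of points is joined by a unit-speed geodesic. -/
def GeodSpace (X : Type*) [MetricSpace X] : Prop :=
  ∀ x y : X, ∃ σ : ℝ → X, UnitGeodFromTo σ x y

/-- Non-positive curvature in the sense of Alexandrov (CN/Bruhat–Tits inequality); together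
with completeness and geodesicity this is the metric counterpart of a complete simply
connected space of non-positive curvature. -/
def CNIneq (X : Type*) [MetricSpace X] : Prop :=
  ∀ x y z m : X, dist y m = dist y z / 2 → dist z m = dist y z / 2 →
    dist x m ^ 2 ≤ dist x y ^ 2 / 2 + dist x z ^ 2 / 2 - dist y z ^ 2 / 4

/-! In a CN space the distance between two geodesic segments, compared at the same proportion
of their lengths, is at most the larger of the distances between their endpoints: the CN
inequality gives this at midpoints, induction at dyadic proportions, and continuity everywhere.
Apply this to the segments from `χᵢ 0` to `Φ t xᵢ`: their endpoints stay within `dist (χ₁ 0) (χ₂ 0)`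
and `dist x₁ x₂` of each other because `Φ t` is nonexpansive, so their points at arc length `s`
are within a bound independent of `t`, and as `t → ∞` these points converge to `χᵢ s`. -/

open Set Filter Topology

lemma dyadic_mem_of_add_div_two_mem {S : Set ℝ} (h0 : (0 : ℝ) ∈ S) (h1 : (1 : ℝ) ∈ S)
    (hmid : ∀ a ∈ S, ∀ b ∈ S, (a + b) / 2 ∈ S) :
    ∀ n k : ℕ, k ≤ 2 ^ n → (k : ℝ) / 2 ^ n ∈ S := by
  intro n
  induction n with
  | zero =>
    intro k hk
    interval_cases k <;> simpa
  | succ n ih =>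
    intro k hk
    rw [pow_succ] at hk
    rcases Nat.even_or_odd' k with ⟨j, rfl | rfl⟩
    · convert ih j (by omega) using 1
      push_cast; ring
    · convert hmid _ (ih j (by omega)) _ (ih (j + 1) (by omega)) using 1
      push_cast; ring

lemma Icc_subset_of_isClosed_of_add_div_two_mem {S : Set ℝ} (hS : IsClosed S)
    (h0 : (0 : ℝ) ∈ S) (h1 : (1 : ℝ) ∈ S) (hmid : ∀ a ∈ S, ∀ b ∈ S, (a + b) / 2 ∈ S) :
    Icc 0 1 ⊆ S := by
  rintro x ⟨hx0, hx1⟩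
  set u : ℕ → ℝ := fun n => (⌊x * 2 ^ n⌋₊ : ℝ) / 2 ^ n
  have hu_mem : ∀ n, u n ∈ S := fun n =>
    dyadic_mem_of_add_div_two_mem h0 h1 hmid n _
      (Nat.floor_le_of_le (by push_cast; nlinarith [pow_pos (two_pos (α := ℝ)) n]))
  have hu_le : ∀ n, u n ≤ x := fun n => by
    rw [div_le_iff₀ (by positivity)]; exact Nat.floor_le (by positivity)
  have hu_ge : ∀ n, x - (1 / 2) ^ n ≤ u n := fun n => by
    have := Nat.lt_floor_add_one (x * 2 ^ n)
    rw [one_div_pow, le_div_iff₀ (by positivity)]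
    field_simp
    linarith
  have hlim : Tendsto (fun n => x - (1 / 2 : ℝ) ^ n) atTop (𝓝 x) := by
    simpa using tendsto_const_nhds.sub
      (tendsto_pow_atTop_nhds_zero_of_lt_one (r := (1 / 2 : ℝ)) (by norm_num) (by norm_num))
  exact hS.mem_of_tendsto (tendsto_of_tendsto_of_tendsto_of_le_of_le hlim tendsto_const_nhds
    hu_ge hu_le) (Eventually.of_forall hu_mem)

section Geodesic

variable {X : Type*} [MetricSpace X]

def IsMidpoint (m y z : X) : Prop :=
  dist y m = dist y z / 2 ∧ dist z m = dist y z / 2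

lemma IsMidpoint.symm {m y z : X} (h : IsMidpoint m y z) : IsMidpoint m z y := by
  unfold IsMidpoint at *
  rw [dist_comm z y]
  exact h.symm

namespace UnitGeodFromTo

variable {σ : ℝ → X} {x y : X}

lemma dist_apply_mul (h : UnitGeodFromTo σ x y) {u v : ℝ} (hu : u ∈ Icc (0 : ℝ) 1)
    (hv : v ∈ Icc (0 : ℝ) 1) :
    dist (σ (u * dist x y)) (σ (v * dist x y)) = |u - v| * dist x y := by
  have hL : 0 ≤ dist x y := dist_nonneg
  rw [h.2.2 _ ⟨mul_nonneg hu.1 hL, mul_le_of_le_one_left hL hu.2⟩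
    _ ⟨mul_nonneg hv.1 hL, mul_le_of_le_one_left hL hv.2⟩, ← sub_mul, abs_mul, abs_of_nonneg hL]

lemma isMidpoint_apply (h : UnitGeodFromTo σ x y) {a b : ℝ} (ha : a ∈ Icc (0 : ℝ) 1)
    (hb : b ∈ Icc (0 : ℝ) 1) :
    IsMidpoint (σ ((a + b) / 2 * dist x y)) (σ (a * dist x y)) (σ (b * dist x y)) := by
  have hc : (a + b) / 2 ∈ Icc (0 : ℝ) 1 := ⟨by linarith [ha.1, hb.1], by linarith [ha.2, hb.2]⟩
  unfold IsMidpoint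
  rw [h.dist_apply_mul ha hc, h.dist_apply_mul hb hc, h.dist_apply_mul ha hb,
    show a - (a + b) / 2 = (a - b) / 2 by ring, show b - (a + b) / 2 = -((a - b) / 2) by ring,
    abs_neg, abs_div, abs_two]
  constructor <;> ring

lemma isMidpoint (h : UnitGeodFromTo σ x y) : IsMidpoint (σ (dist x y / 2)) x y := by
  simpa [h.1, h.2.1, div_eq_inv_mul] using
    h.isMidpoint_apply (a := 0) (b := 1) ⟨le_rfl, zero_le_one⟩ ⟨zero_le_one, le_rfl⟩

lemma continuousOn (h : UnitGeodFromTo σ x y) : ContinuousOn σ (Icc 0 (dist x y)) :=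
  (LipschitzOnWith.of_dist_le_mul (K := 1) fun s hs t ht => by
    rw [h.2.2 s hs t ht, Real.dist_eq, NNReal.coe_one, one_mul]).continuousOn

lemma continuousOn_apply_mul (h : UnitGeodFromTo σ x y) :
    ContinuousOn (fun u => σ (u * dist x y)) (Icc 0 1) :=
  h.continuousOn.comp (continuousOn_id.mul continuousOn_const) fun _ hu =>
    ⟨mul_nonneg hu.1 dist_nonneg, mul_le_of_le_one_left dist_nonneg hu.2⟩

end UnitGeodFromTo

lemma GeodSpace.exists_isMidpoint (hgeo : GeodSpace X) (x y : X) : ∃ m, IsMidpoint m x y :=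
  let ⟨_, hσ⟩ := hgeo x y
  ⟨_, hσ.isMidpoint⟩

namespace CNIneq

lemma dist_isMidpoint_le_half (hcn : CNIneq X) {x y z m n : X} (hm : IsMidpoint m x y)
    (hn : IsMidpoint n x z) : dist m n ≤ dist y z / 2 := by
  -- CN seen from `n` on the segment `x y` and from `y` on `x z`; the `dist n y` terms cancel.
  have h1 := hcn n x y m hm.1 hm.2
  have h2 := hcn y x z n hn.1 hn.2
  rw [dist_comm n m, dist_comm n x, dist_comm n y, hn.1] at h1
  rw [dist_comm y x] at h2
  exact (pow_le_pow_iff_left₀ dist_nonneg (by positivity) two_ne_zero).1 (by nlinarith)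

lemma dist_isMidpoint_le (hcn : CNIneq X) (hgeo : GeodSpace X) {x y x' y' m m' : X}
    (hm : IsMidpoint m x y) (hm' : IsMidpoint m' x' y') :
    dist m m' ≤ dist x x' / 2 + dist y y' / 2 := by
  obtain ⟨n, hn⟩ := hgeo.exists_isMidpoint x y'
  have h₁ : dist m n ≤ dist y y' / 2 := hcn.dist_isMidpoint_le_half hm hn
  have h₂ : dist m' n ≤ dist x' x / 2 := hcn.dist_isMidpoint_le_half hm'.symm hn.symm
  rw [dist_comm x' x] at h₂
  linarith [dist_triangle_right m m' n]

lemma dist_unitGeod_le_max (hcn : CNIneq X) (hgeo : GeodSpace X) {σ σ' : ℝ → X} {x y x' y' : X}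
    (h : UnitGeodFromTo σ x y) (h' : UnitGeodFromTo σ' x' y') {u : ℝ} (hu : u ∈ Icc (0 : ℝ) 1) :
    dist (σ (u * dist x y)) (σ' (u * dist x' y')) ≤ max (dist x x') (dist y y') := by
  set f : ℝ → ℝ := fun u => dist (σ (u * dist x y)) (σ' (u * dist x' y'))
  suffices Icc 0 1 ⊆ Icc 0 1 ∩ f ⁻¹' Iic (max (dist x x') (dist y y')) from (this hu).2
  refine Icc_subset_of_isClosed_of_add_div_two_mem
    ((continuous_dist.comp_continuousOn
      (h.continuousOn_apply_mul.prodMk h'.continuousOn_apply_mul)).preimage_isClosed_of_isClosed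
      isClosed_Icc isClosed_Iic) ⟨⟨le_rfl, zero_le_one⟩, ?_⟩ ⟨⟨zero_le_one, le_rfl⟩, ?_⟩ ?_
  · simp [f, h.1, h'.1]
  · simp [f, h.2.1, h'.2.1]
  · rintro a ⟨ha, hfa⟩ b ⟨hb, hfb⟩
    refine ⟨⟨by linarith [ha.1, hb.1], by linarith [ha.2, hb.2]⟩, ?_⟩
    have := hcn.dist_isMidpoint_le hgeo (h.isMidpoint_apply ha hb) (h'.isMidpoint_apply ha hb)
    simp only [f, mem_preimage, mem_Iic] at hfa hfb ⊢
    linarith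

lemma dist_unitGeod_apply_le (hcn : CNIneq X) (hgeo : GeodSpace X) {σ₁ σ₂ : ℝ → X}
    {p₁ q₁ p₂ q₂ : X} (h₁ : UnitGeodFromTo σ₁ p₁ q₁) (h₂ : UnitGeodFromTo σ₂ p₂ q₂) {s : ℝ}
    (hs : 0 ≤ s) (hs₁ : s ≤ dist p₁ q₁) (hs₂ : s ≤ dist p₂ q₂) :
    dist (σ₁ s) (σ₂ s) ≤ 2 * (dist p₁ p₂ + dist q₁ q₂) := by
  set u := s / dist p₁ q₁
  have hu : u ∈ Icc (0 : ℝ) 1 := ⟨div_nonneg hs dist_nonneg, div_le_one_of_le₀ hs₁ dist_nonneg⟩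
  have hus : u * dist p₁ q₁ = s := div_mul_cancel_of_imp fun h => le_antisymm (h ▸ hs₁) hs
  have hmax := hcn.dist_unitGeod_le_max hgeo h₁ h₂ hu
  rw [hus] at hmax
  -- `σ₂` is compared at proportion `u` of its own length, which is not arc length `s`.
  have hshift : dist (σ₂ (u * dist p₂ q₂)) (σ₂ s) ≤ dist p₁ p₂ + dist q₁ q₂ := by
    have huL : u * dist p₂ q₂ ∈ Icc 0 (dist p₂ q₂) :=
      ⟨mul_nonneg hu.1 dist_nonneg, mul_le_of_le_one_left dist_nonneg hu.2⟩
    rw [h₂.2.2 _ huL s ⟨hs, hs₂⟩, ← hus, ← mul_sub, abs_mul, abs_of_nonneg hu.1,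
      ← Real.dist_eq]
    exact (mul_le_of_le_one_left dist_nonneg hu.2).trans (by
      rw [dist_comm]; exact dist_dist_dist_le p₁ q₁ p₂ q₂)
  calc dist (σ₁ s) (σ₂ s)
        ≤ dist (σ₁ s) (σ₂ (u * dist p₂ q₂)) + dist (σ₂ (u * dist p₂ q₂)) (σ₂ s) :=
          dist_triangle _ _ _
    _ ≤ max (dist p₁ p₂) (dist q₁ q₂) + (dist p₁ p₂ + dist q₁ q₂) := add_le_add hmax hshift
    _ ≤ 2 * (dist p₁ p₂ + dist q₁ q₂) := by
        linarith [max_le_add_of_nonneg (dist_nonneg (x := p₁) (y := p₂))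
          (dist_nonneg (x := q₁) (y := q₂))]

end CNIneq

lemma IsAsymptoticTo.eventually {γ χ : ℝ → X} (h : IsAsymptoticTo γ χ) {s ε : ℝ} (hs : 0 < s)
    (hε : 0 < ε) : ∀ᶠ t in atTop, s ≤ dist (χ 0) (γ t) ∧
      ∀ σ : ℝ → X, UnitGeodFromTo σ (χ 0) (γ t) → dist (σ s) (χ s) ≤ ε :=
  eventually_atTop.2 (h.2 s hs ε hε)

end Geodesic

theorem stmt_18_general {X : Type*} [MetricSpace X]
    (hgeo : GeodSpace X) (hcn : CNIneq X)
    (Φ : ℝ → X → X)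
    (hnonexp : ∀ t ≥ (0:ℝ), ∀ x y : X, dist (Φ t x) (Φ t y) ≤ dist x y)
    (x₁ x₂ : X) (χ₁ χ₂ : ℝ → X)
    (h₁ : IsAsymptoticTo (fun t => Φ t x₁) χ₁)
    (h₂ : IsAsymptoticTo (fun t => Φ t x₂) χ₂) :
    ∃ C : ℝ, ∀ t : ℝ, 0 ≤ t → dist (χ₁ t) (χ₂ t) ≤ C := by
  refine ⟨2 * (dist (χ₁ 0) (χ₂ 0) + dist x₁ x₂) + 2, fun s hs => ?_⟩
  rcases hs.eq_or_lt with rfl | hs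
  · linarith [dist_nonneg (x := χ₁ 0) (y := χ₂ 0), dist_nonneg (x := x₁) (y := x₂)]
  obtain ⟨t, ⟨⟨hs₁, hclose₁⟩, hs₂, hclose₂⟩, ht⟩ :=
    (((h₁.eventually hs one_pos).and (h₂.eventually hs one_pos)).and
      (eventually_ge_atTop 0)).exists
  obtain ⟨σ₁, hσ₁⟩ := hgeo (χ₁ 0) (Φ t x₁)
  obtain ⟨σ₂, hσ₂⟩ := hgeo (χ₂ 0) (Φ t x₂)
  have hσ := hcn.dist_unitGeod_apply_le hgeo hσ₁ hσ₂ hs.le hs₁ hs₂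
  have hΦ := hnonexp t ht x₁ x₂
  calc dist (χ₁ s) (χ₂ s) ≤ dist (σ₁ s) (χ₁ s) + dist (σ₁ s) (σ₂ s) + dist (σ₂ s) (χ₂ s) := by
        rw [dist_comm (σ₁ s)]; exact dist_triangle4 _ _ _ _
    _ ≤ 1 + 2 * (dist (χ₁ 0) (χ₂ 0) + dist x₁ x₂) + 1 := by
        gcongr
        · exact hclose₁ σ₁ hσ₁
        · linarith
        · exact hclose₂ σ₂ hσ₂
    _ = 2 * (dist (χ₁ 0) (χ₂ 0) + dist x₁ x₂) + 2 := by ring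

/-- **Distance-decreasing semiflows have parallel asymptotic rays.**  Let `X` be a uniquely
geodesic, non-positively curved (CN inequality) complete metric space, and `Φ` a semiflow on
`X` which is distance-nonincreasing.  If the trajectories `t ↦ Φ t xᵢ` (`i = 1, 2`) are
asymptotic to geodesic rays `χᵢ`, then `χ₁` and `χ₂` are parallel:
`sup_t dist (χ₁ t) (χ₂ t) < ∞`. -/
theorem stmt_18 {X : Type*} [MetricSpace X] [CompleteSpace X]
    (hgeo : GeodSpace X) (hcn : CNIneq X)
    (huniq : ∀ (x y : X) (σ₁ σ₂ : ℝ → X), UnitGeodFromTo σ₁ x y → UnitGeodFromTo σ₂ x y →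
      ∀ s ∈ Set.Icc (0 : ℝ) (dist x y), σ₁ s = σ₂ s)
    (Φ : ℝ → X → X)
    (hΦ0 : ∀ x, Φ 0 x = x)
    (hΦadd : ∀ s ≥ (0:ℝ), ∀ t ≥ (0:ℝ), ∀ x, Φ (s + t) x = Φ s (Φ t x))
    (hnonexp : ∀ t ≥ (0:ℝ), ∀ x y : X, dist (Φ t x) (Φ t y) ≤ dist x y)
    (x₁ x₂ : X) (χ₁ χ₂ : ℝ → X)
    (h₁ : IsAsymptoticTo (fun t => Φ t x₁) χ₁)
    (h₂ : IsAsymptoticTo (fun t => Φ t x₂) χ₂) :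
    ∃ C : ℝ, ∀ t : ℝ, 0 ≤ t → dist (χ₁ t) (χ₂ t) ≤ C :=
  stmt_18_general hgeo hcn Φ hnonexp x₁ x₂ χ₁ χ₂ h₁ h₂
end
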